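/- Binomial expansion of generalized Gončarov polynomials: with (t_n^{(j)}) the generalized Gončarov basis for (𝔡, Z^{(j)}) and (p_n) the basic sequence of 𝔡, for all ξ ∈ K and n ∈ ℕ: t_n(x+ξ) = Σ_{i=0}^n C(n,i) t_{n−i}^{(i)}(ξ) p_i(x). In particular t_n(x) = Σ_{i=0}^n C(n,i) t_{n−i}^{(i)}(0) p_i(x). -/

import Mathlib

open Polynomial

/-- The shift operator `E_a : K[x] → K[x]`, `f(x) ↦ f(x+a)`, as a linear endomorphism. -/
noncomputable def shiftOp (K : Type*) [Field K] (a : K) : Module.End K (Polynomial K) :=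
  (aeval (X + C a) : Polynomial K →ₐ[K] Polynomial K).toLinearMap

/-- A linear operator on `K[x]` is shift-invariant if it commutes with every shift `E_a`. -/
def IsShiftInvariant {K : Type*} [Field K] (s : Module.End K (Polynomial K)) : Prop :=
  ∀ a : K, s ∘ₗ shiftOp K a = shiftOp K a ∘ₗ s

/-- A delta operator: shift-invariant and sends `X` to a nonzero constant. -/
def IsDeltaOperator {K : Type*} [Field K] (d : Module.End K (Polynomial K)) : Prop :=
  IsShiftInvariant d ∧ ∃ c : K, c ≠ 0 ∧ d X = C c

/-- The sequence of basic polynomials of a delta operator `d`. -/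
def IsBasicSequence {K : Type*} [Field K] (d : Module.End K (Polynomial K))
    (p : ℕ → Polynomial K) : Prop :=
  p 0 = 1 ∧ (∀ n, 1 ≤ n → (p n).eval 0 = 0) ∧
    ∀ n, 1 ≤ n → d (p n) = (n : K) • p (n - 1)

/-- The generalized Gončarov basis associated with the pair `(d, z)`:
`deg t_n = n` and `ε_{z_i}(d^i t_n) = n! δ_{i,n}`. -/
def IsGoncarovBasis {K : Type*} [Field K] (d : Module.End K (Polynomial K))
    (z : ℕ → K) (t : ℕ → Polynomial K) : Prop :=
  ∀ n, (t n).natDegree = n ∧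
    ∀ i, ((d ^ i) (t n)).eval (z i) = if i = n then (n.factorial : K) else 0

/-!
A delta operator lowers degrees by exactly one, so a polynomial of degree at most `n` is
determined by the values `(𝔡ⁱ f)(wᵢ)`, `i ≤ n`, on any grid `w`. Comparing such values gives
`𝔡ᵏ t_n = n(n-1)⋯(n-k+1) · t_{n-k}^{(k)}` and the expansion `f = ∑ (𝔡ⁱ f)(0) / i! · pᵢ` in the
basic sequence. Applying the latter to `f(x) = t_n(x + ξ)`, whose `𝔡ⁱ f` evaluated at `0` is
`(𝔡ⁱ t_n)(ξ)` by shift invariance, gives the binomial formula.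
-/

section ShiftInvariant

variable {K : Type*} [Field K] {d : Module.End K K[X]}

theorem shiftOp_apply (a : K) (f : K[X]) : shiftOp K a f = taylor a f := by
  simp [shiftOp, taylor_apply, comp, aeval_def]

theorem isShiftInvariant_iff_commute :
    IsShiftInvariant d ↔ ∀ a, Commute d (shiftOp K a) := by
  simp only [IsShiftInvariant, Commute, SemiconjBy, Module.End.mul_eq_comp]

namespace IsShiftInvariant

variable (h : IsShiftInvariant d)
include h

theorem pow (k : ℕ) : IsShiftInvariant (d ^ k) :=
  isShiftInvariant_iff_commute.2 fun a => (isShiftInvariant_iff_commute.1 h a).pow_left k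

theorem apply_taylor (a : K) (f : K[X]) : d (taylor a f) = taylor a (d f) := by
  simpa [shiftOp_apply] using LinearMap.congr_fun (h a) f

/-- Rota's expansion theorem. -/
theorem eq_sum_hasseDeriv [Infinite K] (f : K[X]) :
    d f = ∑ j ∈ Finset.range (f.natDegree + 1), (d (X ^ j)).eval 0 • hasseDeriv j f := by
  refine Polynomial.funext fun a => ?_
  have hf : (taylor a f).natDegree < f.natDegree + 1 := by rw [natDegree_taylor]; omega
  have heval : (d f).eval a = (d (taylor a f)).eval 0 := by
    rw [h.apply_taylor, taylor_eval, zero_add]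
  rw [heval, (taylor a f).as_sum_range' _ hf]
  simp only [map_sum, eval_finsetSum]
  refine Finset.sum_congr rfl fun j _ => ?_
  rw [← C_mul_X_pow_eq_monomial, ← smul_eq_C_mul, map_smul, eval_smul, eval_smul, taylor_coeff,
    smul_eq_mul, smul_eq_mul, mul_comm]

variable {c : K} (hX : d X = C c)
include hX

theorem apply_one : d 1 = 0 := by
  have h1 := h.apply_taylor 1 X
  rw [taylor_X, hX, taylor_C, map_add, hX, C_1] at h1
  simpa using h1

theorem coeff_apply [Infinite K] {f : K[X]} {N : ℕ} (hf : f.natDegree ≤ N + 1) :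
    (d f).coeff N = (N + 1) * c * f.coeff (N + 1) := by
  rw [h.eq_sum_hasseDeriv f, finsetSum_coeff, Finset.sum_eq_single 1]
  · rw [coeff_smul, hasseDeriv_coeff, pow_one, hX, eval_C, smul_eq_mul, Nat.choose_one_right]
    push_cast
    ring
  · rintro (_ | _ | j) _ hj
    · simp [h.apply_one hX]
    · contradiction
    · rw [coeff_smul, hasseDeriv_coeff, coeff_eq_zero_of_natDegree_lt (by omega)]
      simp
  · intro h1
    rw [coeff_smul, hasseDeriv_coeff, coeff_eq_zero_of_natDegree_lt (by simp at h1; omega)]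
    simp

theorem natDegree_apply_le [Infinite K] (f : K[X]) : (d f).natDegree ≤ f.natDegree - 1 := by
  rw [natDegree_le_iff_coeff_eq_zero]
  intro N hN
  rw [h.coeff_apply hX (by omega), coeff_eq_zero_of_natDegree_lt (by omega), mul_zero]

end IsShiftInvariant

end ShiftInvariant

namespace IsDeltaOperator

variable {K : Type*} [Field K] [CharZero K] {d : Module.End K K[X]} (hd : IsDeltaOperator d)
include hd

theorem coeff_apply_natDegree_sub_one_ne_zero {f : K[X]} (hf : f.natDegree ≠ 0) :
    (d f).coeff (f.natDegree - 1) ≠ 0 := by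
  obtain ⟨c, hc, hX⟩ := hd.2
  obtain ⟨N, hN⟩ : ∃ N, f.natDegree = N + 1 := ⟨f.natDegree - 1, by omega⟩
  have hlead : f.coeff (N + 1) ≠ 0 := by
    rw [← hN]
    exact leadingCoeff_ne_zero.2 (ne_zero_of_natDegree_gt (Nat.pos_of_ne_zero hf))
  rw [hN, Nat.add_sub_cancel, hd.1.coeff_apply hX hN.le]
  exact mul_ne_zero (mul_ne_zero (by exact_mod_cast N.succ_ne_zero) hc) hlead

theorem natDegree_apply (f : K[X]) : (d f).natDegree = f.natDegree - 1 := by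
  obtain ⟨c, -, hX⟩ := hd.2
  refine (hd.1.natDegree_apply_le hX f).antisymm ?_
  by_cases hf : f.natDegree = 0
  · omega
  · exact le_natDegree_of_ne_zero (hd.coeff_apply_natDegree_sub_one_ne_zero hf)

theorem apply_eq_zero_iff {f : K[X]} : d f = 0 ↔ f.natDegree = 0 := by
  refine ⟨fun hf => by_contra fun hf' => ?_, fun hf => ?_⟩
  · simpa [hf] using hd.coeff_apply_natDegree_sub_one_ne_zero hf'
  · obtain ⟨c, -, hX⟩ := hd.2
    rw [eq_C_of_natDegree_eq_zero hf, ← mul_one (C _), ← smul_eq_C_mul, map_smul,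
      hd.1.apply_one hX, smul_zero]

theorem apply_one : d 1 = 0 :=
  hd.apply_eq_zero_iff.2 natDegree_one

theorem natDegree_pow_apply (k : ℕ) (f : K[X]) :
    ((d ^ k) f).natDegree = f.natDegree - k := by
  induction k with
  | zero => simp
  | succ k ih => rw [pow_succ', Module.End.mul_apply, hd.natDegree_apply, ih, Nat.sub_sub]

theorem eq_zero_of_eval_pow_apply_eq_zero {n : ℕ} {w : ℕ → K} {g : K[X]}
    (hg : g.natDegree ≤ n) (hw : ∀ i ≤ n, ((d ^ i) g).eval (w i) = 0) : g = 0 := by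
  induction n generalizing w g with
  | zero =>
    rw [eq_C_of_natDegree_le_zero hg] at hw ⊢
    simpa using hw 0 le_rfl
  | succ n ih =>
    have hdg : d g = 0 := ih (w := fun i => w (i + 1)) (by rw [hd.natDegree_apply]; omega)
      fun i hi => by simpa [pow_succ] using hw (i + 1) (by omega)
    rw [eq_C_of_natDegree_eq_zero (hd.apply_eq_zero_iff.1 hdg)] at hw ⊢
    simpa using hw 0 (Nat.zero_le _)

theorem eq_of_eval_pow_apply_eq {n : ℕ} {w : ℕ → K} {f g : K[X]}
    (hf : f.natDegree ≤ n) (hg : g.natDegree ≤ n)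
    (hfg : ∀ i ≤ n, ((d ^ i) f).eval (w i) = ((d ^ i) g).eval (w i)) : f = g :=
  sub_eq_zero.1 <| hd.eq_zero_of_eval_pow_apply_eq_zero
    ((natDegree_sub_le_of_le hf hg).trans_eq (max_self n))
    fun i hi => by rw [map_sub, eval_sub, hfg i hi, sub_self]

end IsDeltaOperator

namespace IsBasicSequence

variable {K : Type*} [Field K] {d : Module.End K K[X]} {p : ℕ → K[X]}

theorem pow_apply (hp : IsBasicSequence d p) (h1 : d 1 = 0) (k i : ℕ) :
    (d ^ k) (p i) = (i.descFactorial k : K) • p (i - k) := by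
  induction k with
  | zero => simp
  | succ k ih =>
    rw [pow_succ', Module.End.mul_apply, ih, map_smul, Nat.descFactorial_succ]
    rcases Nat.lt_or_ge k i with hk | hk
    · rw [hp.2.2 (i - k) (by omega), smul_smul, Nat.sub_sub, Nat.cast_mul, mul_comm]
    · rw [Nat.sub_eq_zero_of_le hk, hp.1, h1, smul_zero, zero_mul, Nat.cast_zero, zero_smul]

theorem eval_zero_pow_apply (hp : IsBasicSequence d p) (h1 : d 1 = 0) (k i : ℕ) :
    ((d ^ k) (p i)).eval 0 = if k = i then (i.factorial : K) else 0 := by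
  rw [hp.pow_apply h1, eval_smul, smul_eq_mul]
  rcases lt_trichotomy k i with hki | rfl | hik
  · rw [if_neg hki.ne, hp.2.1 _ (by omega), mul_zero]
  · rw [if_pos rfl, Nat.sub_self, hp.1, eval_one, mul_one, Nat.descFactorial_self]
  · rw [if_neg hik.ne', Nat.descFactorial_eq_zero_iff_lt.2 hik, Nat.cast_zero, zero_mul]

variable [CharZero K]

theorem natDegree_le (hd : IsDeltaOperator d) (hp : IsBasicSequence d p) (i : ℕ) :
    (p i).natDegree ≤ i := by
  have h0 : ((d ^ i) (p i)).natDegree = 0 := by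
    rw [hp.pow_apply hd.apply_one, Nat.sub_self, hp.1, smul_eq_C_mul, mul_one, natDegree_C]
  rw [hd.natDegree_pow_apply] at h0
  omega

theorem eq_sum_eval_pow_apply (hd : IsDeltaOperator d) (hp : IsBasicSequence d p) {f : K[X]}
    {n : ℕ} (hf : f.natDegree ≤ n) :
    f = ∑ i ∈ Finset.range (n + 1), (((d ^ i) f).eval 0 / i.factorial) • p i := by
  have hsum : (∑ i ∈ Finset.range (n + 1), (((d ^ i) f).eval 0 / i.factorial) • p i).natDegree
      ≤ n := by
    refine natDegree_sum_le_of_forall_le _ _ fun i hi => ?_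
    exact (natDegree_smul_le _ _).trans ((hp.natDegree_le hd i).trans (by simp at hi; omega))
  refine hd.eq_of_eval_pow_apply_eq (w := fun _ => 0) hf hsum fun k hk => ?_
  simp only [map_sum, map_smul, eval_finsetSum, eval_smul, hp.eval_zero_pow_apply hd.apply_one,
    smul_eq_mul, mul_ite, mul_zero, Finset.sum_ite_eq, Finset.mem_range]
  rw [if_pos (by omega), div_mul_cancel₀ _ (Nat.cast_ne_zero.2 k.factorial_ne_zero)]

end IsBasicSequence

theorem IsGoncarovBasis.pow_apply {K : Type*} [Field K] [CharZero K]
    {d : Module.End K K[X]} (hd : IsDeltaOperator d) {z : ℕ → K} {t s : ℕ → K[X]} {k n : ℕ}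
    (ht : IsGoncarovBasis d z t) (hs : IsGoncarovBasis d (fun i => z (i + k)) s) (hk : k ≤ n) :
    (d ^ k) (t n) = (n.descFactorial k : K) • s (n - k) := by
  refine hd.eq_of_eval_pow_apply_eq (n := n - k) (w := fun i => z (i + k)) ?_ ?_ fun i _ => ?_
  · rw [hd.natDegree_pow_apply, (ht n).1]
  · exact (natDegree_smul_le _ _).trans (hs (n - k)).1.le
  · rw [← Module.End.mul_apply, ← pow_add, (ht n).2, map_smul, eval_smul, (hs (n - k)).2,
      smul_eq_mul]
    by_cases hi : i = n - k
    · rw [if_pos (by omega), if_pos hi, ← Nat.cast_mul, mul_comm,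
        Nat.factorial_mul_descFactorial hk]
    · rw [if_neg (by omega), if_neg hi, mul_zero]

theorem stmt13 {K : Type*} [Field K] [CharZero K] (d : Module.End K (Polynomial K))
    (hd : IsDeltaOperator d) (z : ℕ → K) (p : ℕ → Polynomial K)
    (hp : IsBasicSequence d p) (T : ℕ → ℕ → Polynomial K)
    (hT : ∀ j, IsGoncarovBasis d (fun i => z (i + j)) (T j)) :
    (∀ (ξ : K) (n : ℕ), (T 0 n).comp (X + C ξ) =
        ∑ i ∈ Finset.range (n + 1),
          (n.choose i : K) • ((T i (n - i)).eval ξ) • p i) ∧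
    (∀ n : ℕ, T 0 n =
        ∑ i ∈ Finset.range (n + 1),
          (n.choose i : K) • ((T i (n - i)).eval 0) • p i) := by
  have hT0 : IsGoncarovBasis d z (T 0) := by simpa using hT 0
  have shifted : ∀ (ξ : K) (n : ℕ), (T 0 n).comp (X + C ξ) =
      ∑ i ∈ Finset.range (n + 1), (n.choose i : K) • ((T i (n - i)).eval ξ) • p i := by
    intro ξ n
    rw [← taylor_apply,
      hp.eq_sum_eval_pow_apply hd ((natDegree_taylor _ _).trans_le (hT0 n).1.le)]
    refine Finset.sum_congr rfl fun i hi => ?_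
    rw [(hd.1.pow i).apply_taylor, taylor_eval, zero_add,
      hT0.pow_apply hd (hT i) (by simp at hi; omega), eval_smul, smul_smul, smul_eq_mul,
      Nat.descFactorial_eq_factorial_mul_choose]
    push_cast
    rw [mul_assoc, mul_div_cancel_left₀ _ (Nat.cast_ne_zero.2 i.factorial_ne_zero)]
  exact ⟨shifted, fun n => by simpa using shifted 0 n⟩
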